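/- Let 3 ≤ k ≤ m and u_1, u_2, …, u_k ∈ K_m with Tr_{2^m/2}(u_1·u_j) = 0 for all 2 ≤ j ≤ k, and let R : F_2^{k−1} → F_2 be any function. Define F : F_{2^n} → F_{2^n} by F(x) = x^{2^m+1} + u_1·x·R(Tr_{2^n/2}(u_2x), …, Tr_{2^n/2}(u_kx)), where the value of R is identified with 0 or 1 in F_{2^n}. Then for every β ∈ F_{2^n} with β ∉ K_m, the component function F_β is bent, and its Walsh transform satisfies W_{F_β}(ω) = 2^m·(−1)^{F*_β(ω)} for all ω ∈ F_{2^n}, where, with γ = β + β^{2^m}, G*_β(x) = Tr_{2^m/2}(γ^{−1}x^{2^m+1}) + 1, and F*_β(ω) = G*_β(ω) + D_{βu_1}G*_β(ω)·R(D_{u_2}G*_β(ω), …, D_{u_k}G*_β(ω)). -/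

import Mathlib

/-!
Write `G(x) = Tr(β x^(2^m+1))` and `t(x) = (Tr(u_j x))_j`. Then
`F_β(x) = G(x) + R(t(x)) · Tr(β u₁ x)`, so on each fibre `t(x) = τ` the component is `G` plus a
linear function. The indicator of that fibre is `2^(1-k) Σ_S (-1)^(Σ_{j∈S} (Tr(u_j x) + τ_j))`,
which turns the Walsh transform into a combination of values `W_G(ω') = 2^m (-1)^(G*(ω'))`;
these come from completing the square and the Gauss sum `Σ_x (-1)^(G(x)) = -2^m`, obtained by
pushing the sum forward along the norm `x ↦ x^(2^m+1)`, which is `(2^m+1)`-to-one onto `K_m^*`.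
For `b ∈ K_m` the difference `G*(a + b) + G*(a)` is additive in `b`, and it does not change when
`a` is shifted by `β u₁` because `Tr_m(u₁ u_j) = 0`; so the sum over `S` only keeps the fibre
`τ = (D_{u_j} G*(ω))_j`, which gives the dual. Bentness follows since the signs square to `1`.
-/

open scoped Classical BigOperators

noncomputable section

/-- The finite field with `2^k` elements. -/
abbrev GF (k : ℕ) := GaloisField 2 k

noncomputable instance (k : ℕ) : Fintype (GF k) := Fintype.ofFinite _

/-- The absolute trace `Tr_{2^k/2}`, viewed as an element of `GF k`
(its values lie in the prime field `{0,1}`). -/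
def atr (k : ℕ) (x : GF k) : GF k := ∑ j ∈ Finset.range k, x ^ 2 ^ j

/-- `(-1)^b` for `b ∈ {0,1} ⊆ GF k`. -/
def chi (k : ℕ) (x : GF k) : ℤ := if x = 0 then 1 else -1

/-- The Walsh transform of a Boolean-valued function `f` on `GF k`
(`f` takes values in the prime field `{0,1}`). -/
def walsh (k : ℕ) (f : GF k → GF k) (ω : GF k) : ℤ :=
  ∑ x : GF k, chi k (f x + atr k (ω * x))

/-- The trace `Tr_{2^m/2}` of the subfield `K_m ⊆ GF (2*m)`, viewed inside `GF (2*m)`. -/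
def trKm (m : ℕ) (x : GF (2*m)) : GF (2*m) := ∑ j ∈ Finset.range m, x ^ 2 ^ j

/-- The subfield `K_m = {x : x^(2^m) = x}` of `GF (2*m)`, as a finset. -/
def Km (m : ℕ) : Finset (GF (2*m)) := Finset.univ.filter (fun x => x ^ 2 ^ m = x)

/-- `max_{a ≠ 0, ω} |W_{F_a}(ω)|` for a vectorial function `F` on `GF (2*m)`. -/
def maxAbsW (m : ℕ) (F : GF (2*m) → GF (2*m)) : ℕ :=
  Finset.sup ((Finset.univ.filter (fun a : GF (2*m) => a ≠ 0)) ×ˢ (Finset.univ : Finset (GF (2*m))))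
    (fun p => (walsh (2*m) (fun x => atr (2*m) (p.1 * F x)) p.2).natAbs)

/-- The nonlinearity `N_F = 2^(n-1) - (1/2) max_{a ≠ 0, ω} |W_{F_a}(ω)|`, `n = 2m`. -/
def nlin (m : ℕ) (F : GF (2*m) → GF (2*m)) : ℚ :=
  2 ^ (2*m - 1) - (maxAbsW m F : ℚ) / 2


/-- The dual `G*_β(x) = Tr_{2^m/2}(γ⁻¹·x^(2^m+1)) + 1` of the Niho quadratic component,
with `γ = β + β^(2^m)`. -/
def nihoDual (m : ℕ) (γ : GF (2*m)) (x : GF (2*m)) : GF (2*m) :=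
  trKm m (γ⁻¹ * x ^ (2 ^ m + 1)) + 1

open Finset Polynomial

def IsBit {R : Type*} [Zero R] [One R] (x : R) : Prop := x = 0 ∨ x = 1

theorem card_le_natDegree_of_eval_eq_zero {R : Type*} [CommRing R] [IsDomain R] {p : R[X]}
    (hp : p ≠ 0) {s : Finset R} (hs : ∀ x ∈ s, p.eval x = 0) : #s ≤ p.natDegree :=
  card_le_degree_of_subset_roots fun x hx => (mem_roots hp).2 (hs x hx)

theorem card_fiber_eq_of_card_mul_le {α β : Type*} [DecidableEq β] {s : Finset α} {t : Finset β}
    {f : α → β} {c : ℕ} (hf : ∀ a ∈ s, f a ∈ t) (hc : ∀ b ∈ t, #{a ∈ s | f a = b} ≤ c)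
    (hs : #t * c ≤ #s) {b : β} (hb : b ∈ t) : #{a ∈ s | f a = b} = c := by
  have hsum : ∑ b ∈ t, #{a ∈ s | f a = b} = ∑ _b ∈ t, c := by
    refine le_antisymm (sum_le_sum hc) ?_
    rw [← card_eq_sum_card_fiberwise hf, sum_const, smul_eq_mul]
    exact hs
  exact (sum_eq_sum_iff_of_le hc).1 hsum b hb

section CharTwo

variable {R : Type*} [CommRing R] [CharP R 2]

theorem IsBit.add {a b : R} (ha : IsBit a) (hb : IsBit b) : IsBit (a + b) := by
  rcases ha with rfl | rfl <;> rcases hb with rfl | rfl <;> simp [IsBit, CharTwo.add_self_eq_zero]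

theorem isBit_sum {ι : Type*} {s : Finset ι} {f : ι → R} (h : ∀ i ∈ s, IsBit (f i)) :
    IsBit (∑ i ∈ s, f i) :=
  Finset.sum_induction f IsBit (fun _ _ => IsBit.add) (Or.inl rfl) h

variable (R) in
def frobTrace (r : ℕ) : R →+ R where
  toFun x := ∑ j ∈ range r, x ^ 2 ^ j
  map_zero' := by simp
  map_add' x y := by simp only [add_pow_char_pow, sum_add_distrib]

theorem frobTrace_apply (r : ℕ) (x : R) : frobTrace R r x = ∑ j ∈ range r, x ^ 2 ^ j := rfl

theorem frobTrace_sq (r : ℕ) (x : R) : frobTrace R r x ^ 2 = frobTrace R r (x ^ 2) := by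
  simp only [frobTrace_apply, CharTwo.sum_sq, ← pow_mul, mul_comm]

theorem frobTrace_sq_of_pow_eq {r : ℕ} {x : R} (hx : x ^ 2 ^ r = x) :
    frobTrace R r (x ^ 2) = frobTrace R r x := by
  refine add_right_cancel (b := x) ?_
  calc frobTrace R r (x ^ 2) + x = ∑ j ∈ range r, x ^ 2 ^ (j + 1) + x ^ 2 ^ 0 := by
        rw [frobTrace_apply, pow_zero, pow_one]
        exact congrArg (· + x) (sum_congr rfl fun j _ => by rw [← pow_mul, pow_succ'])
    _ = ∑ j ∈ range r, x ^ 2 ^ j + x ^ 2 ^ r :=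
        (sum_range_succ' (fun j => x ^ 2 ^ j) r).symm.trans (sum_range_succ _ r)
    _ = frobTrace R r x + x := by rw [hx, frobTrace_apply]

theorem frobTrace_add_right (r s : ℕ) (x : R) :
    frobTrace R (r + s) x = frobTrace R r x + frobTrace R s (x ^ 2 ^ r) := by
  simp only [frobTrace_apply, sum_range_add, ← pow_mul, ← pow_add]

theorem isBit_frobTrace [IsDomain R] {r : ℕ} {x : R} (hx : x ^ 2 ^ r = x) :
    IsBit (frobTrace R r x) :=
  IsIdempotentElem.iff_eq_zero_or_one.1 <| by
    rw [IsIdempotentElem, ← sq, frobTrace_sq, frobTrace_sq_of_pow_eq hx]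

theorem exists_frobTrace_ne_zero [IsDomain R] {r : ℕ} (hr : r ≠ 0) {s : Finset R}
    (hs : 2 ^ (r - 1) < #s) : ∃ x ∈ s, frobTrace R r x ≠ 0 := by
  by_contra! h
  set p : R[X] := ∑ j ∈ range r, X ^ 2 ^ j
  have hp : p ≠ 0 := by
    intro hp
    have h1 : p.coeff 1 = 1 := by
      simp [p, finsetSum_coeff, coeff_X_pow, eq_comm (a := 1), Nat.pos_of_ne_zero hr]
    simp [hp] at h1
  have hdeg : p.natDegree ≤ 2 ^ (r - 1) :=
    natDegree_sum_le_of_forall_le _ _ fun j hj => by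
      rw [natDegree_X_pow]; exact Nat.pow_le_pow_right two_pos (by simp at hj; omega)
  have := card_le_natDegree_of_eval_eq_zero hp (s := s) fun x hx => by
    simpa [p, eval_finsetSum, frobTrace_apply] using h x hx
  omega

end CharTwo

section Chi

variable {N : ℕ}

@[simp] theorem chi_zero : chi N 0 = 1 := if_pos rfl

@[simp] theorem chi_one : chi N 1 = -1 := if_neg one_ne_zero

theorem chi_sq (x : GF N) : chi N x ^ 2 = 1 := by
  unfold chi; split_ifs <;> norm_num

theorem chi_add {a b : GF N} (ha : IsBit a) (hb : IsBit b) :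
    chi N (a + b) = chi N a * chi N b := by
  rcases ha with rfl | rfl <;> rcases hb with rfl | rfl <;> simp [CharTwo.add_self_eq_zero]

theorem chi_sum {ι : Type*} {s : Finset ι} {a : ι → GF N} (ha : ∀ i ∈ s, IsBit (a i)) :
    chi N (∑ i ∈ s, a i) = ∏ i ∈ s, chi N (a i) := by
  induction s using Finset.cons_induction with
  | empty => simp
  | cons i s hi ih =>
    have hs : ∀ j ∈ s, IsBit (a j) := fun j hj => ha j (mem_cons_of_mem hj)
    rw [sum_cons, prod_cons, chi_add (ha i (mem_cons_self i s)) (isBit_sum hs), ih hs]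

theorem sum_powerset_chi_sum_add {ι : Type*} [Fintype ι] {a b : ι → GF N}
    (ha : ∀ i, IsBit (a i)) (hb : ∀ i, IsBit (b i)) :
    ∑ S ∈ univ.powerset, chi N (∑ i ∈ S, (a i + b i))
      = if a = b then 2 ^ Fintype.card ι else 0 := by
  have h1 : ∀ i, 1 + chi N (a i + b i) = if a i = b i then 2 else 0 := fun i => by
    rcases ha i with h | h <;> rcases hb i with h' | h' <;> simp [h, h', CharTwo.add_self_eq_zero]
  rw [sum_congr rfl fun S _ => chi_sum fun i _ => (ha i).add (hb i), ← prod_one_add]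
  simp only [h1, Fintype.prod_ite_zero, prod_const, card_univ, funext_iff]

end Chi

section GaloisField

variable {m : ℕ}

theorem card_GF {k : ℕ} (hk : k ≠ 0) : Fintype.card (GF k) = 2 ^ k := by
  rw [← Nat.card_eq_fintype_card, GaloisField.card 2 k hk]

theorem pow_two_pow_self {k : ℕ} (hk : k ≠ 0) (x : GF k) : x ^ 2 ^ k = x := by
  rw [← card_GF hk, FiniteField.pow_card]

theorem frob_frob (hm : m ≠ 0) (x : GF (2 * m)) : (x ^ 2 ^ m) ^ 2 ^ m = x := by
  rw [← pow_mul, ← pow_add, ← two_mul, pow_two_pow_self (by omega)]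

theorem frob_add (x y : GF (2 * m)) : (x + y) ^ 2 ^ m = x ^ 2 ^ m + y ^ 2 ^ m :=
  add_pow_char_pow x y 2 m

theorem ne_zero_of_frob_ne {β : GF (2 * m)} (hβ : β ^ 2 ^ m ≠ β) : m ≠ 0 := by
  rintro rfl; simp at hβ

theorem atr_eq_frobTrace (k : ℕ) (x : GF k) : atr k x = frobTrace (GF k) k x := rfl

theorem trKm_eq_frobTrace (x : GF (2 * m)) : trKm m x = frobTrace (GF (2 * m)) m x := rfl

theorem isBit_atr {k : ℕ} (hk : k ≠ 0) (x : GF k) : IsBit (atr k x) :=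
  isBit_frobTrace (pow_two_pow_self hk x)

theorem isBit_trKm {z : GF (2 * m)} (hz : z ^ 2 ^ m = z) : IsBit (trKm m z) :=
  isBit_frobTrace hz

theorem atr_add (k : ℕ) (x y : GF k) : atr k (x + y) = atr k x + atr k y :=
  map_add (frobTrace (GF k) k) x y

theorem trKm_add (x y : GF (2 * m)) : trKm m (x + y) = trKm m x + trKm m y :=
  map_add (frobTrace (GF (2 * m)) m) x y

theorem atr_eq_trKm_add_trKm (x : GF (2 * m)) : atr (2 * m) x = trKm m x + trKm m (x ^ 2 ^ m) := by
  have h := frobTrace_add_right (R := GF (2 * m)) m m x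
  rwa [← two_mul] at h

theorem atr_frob (hm : m ≠ 0) (x : GF (2 * m)) : atr (2 * m) (x ^ 2 ^ m) = atr (2 * m) x := by
  rw [atr_eq_trKm_add_trKm, atr_eq_trKm_add_trKm, frob_frob hm, add_comm]

theorem atr_mul_of_frob_eq (β : GF (2 * m)) {z : GF (2 * m)} (hz : z ^ 2 ^ m = z) :
    atr (2 * m) (β * z) = trKm m ((β + β ^ 2 ^ m) * z) := by
  rw [atr_eq_trKm_add_trKm, mul_pow, hz, add_mul, trKm_add]

theorem atr_of_frob_eq {z : GF (2 * m)} (hz : z ^ 2 ^ m = z) : atr (2 * m) z = 0 := by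
  simpa [CharTwo.add_self_eq_zero, trKm_eq_frobTrace] using atr_mul_of_frob_eq 1 hz

theorem frob_norm (hm : m ≠ 0) (x : GF (2 * m)) : (x ^ (2 ^ m + 1)) ^ 2 ^ m = x ^ (2 ^ m + 1) := by
  rw [pow_succ, mul_pow, frob_frob hm]
  exact mul_comm _ _

theorem frob_gamma (hm : m ≠ 0) (β : GF (2 * m)) : (β + β ^ 2 ^ m) ^ 2 ^ m = β + β ^ 2 ^ m := by
  rw [frob_add, frob_frob hm, add_comm]

theorem gamma_ne_zero {β : GF (2 * m)} (hβ : β ^ 2 ^ m ≠ β) : β + β ^ 2 ^ m ≠ 0 :=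
  fun h => hβ (CharTwo.add_eq_zero.1 h).symm

end GaloisField

section Subfield

variable {m : ℕ}

theorem mem_Km {z : GF (2 * m)} : z ∈ Km m ↔ z ^ 2 ^ m = z := by simp [Km]

theorem norm_mem_Km_erase (hm : m ≠ 0) {x : GF (2 * m)} (hx : x ≠ 0) :
    x ^ (2 ^ m + 1) ∈ (Km m).erase 0 :=
  mem_erase.2 ⟨pow_ne_zero _ hx, mem_Km.2 (frob_norm hm x)⟩

theorem card_filter_frob_add_le (hm : m ≠ 0) (z : GF (2 * m)) :
    #{y | y ^ 2 ^ m + y = z} ≤ 2 ^ m := by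
  have hdeg : (X ^ 2 ^ m + (X - C z) : (GF (2 * m))[X]).natDegree = 2 ^ m := by
    rw [natDegree_add_eq_left_of_natDegree_lt] <;> rw [natDegree_X_pow]
    rw [natDegree_X_sub_C]; exact Nat.one_lt_two_pow hm
  refine (card_le_natDegree_of_eval_eq_zero ?_ fun y hy => ?_).trans hdeg.le
  · rintro h
    rw [h, natDegree_zero] at hdeg
    exact pow_ne_zero m two_ne_zero hdeg.symm
  · rw [mem_filter] at hy
    simp only [eval_add, eval_pow, eval_X, eval_sub, eval_C]
    rw [← hy.2]
    ring

theorem card_Km (hm : m ≠ 0) : #(Km m) = 2 ^ m := by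
  have hKm : Km m = ({y | y ^ 2 ^ m + y = 0} : Finset (GF (2 * m))) := by
    simp only [Km, CharTwo.add_eq_zero]
  refine le_antisymm (hKm ▸ card_filter_frob_add_le hm 0) ?_
  have h := card_le_mul_card_image_of_maps_to (s := univ) (t := Km m)
    (fun y _ => mem_Km.2 (by rw [frob_add, frob_frob hm, add_comm]))
    (2 ^ m) fun z _ => card_filter_frob_add_le hm z
  rw [card_univ, card_GF (by omega), pow_mul', sq] at h
  exact Nat.le_of_mul_le_mul_left h (by positivity)

theorem sum_Km_chi_trKm_mul (hm : m ≠ 0) {γ : GF (2 * m)} (hγ0 : γ ≠ 0) (hγ : γ ^ 2 ^ m = γ) :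
    ∑ z ∈ Km m, chi (2 * m) (trKm m (γ * z)) = 0 := by
  obtain ⟨z₀, hz₀, htr⟩ := exists_frobTrace_ne_zero hm (s := Km m)
    (by rw [card_Km hm]; exact Nat.pow_lt_pow_right one_lt_two (by omega))
  rw [mem_Km] at hz₀
  have htr1 : trKm m z₀ = 1 := (isBit_trKm hz₀).resolve_left htr
  have hz₀0 : z₀ ≠ 0 := by rintro rfl; simp at htr
  have hshift : (γ⁻¹ * z₀) ^ 2 ^ m = γ⁻¹ * z₀ := by rw [mul_pow, inv_pow, hγ, hz₀]
  refine sum_involution (fun z _ => z + γ⁻¹ * z₀) (fun z hz => ?_) (fun z _ _ => ?_)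
    (fun z hz => ?_) (fun z _ => CharTwo.add_cancel_right z _)
  · rw [mul_add, mul_inv_cancel_left₀ hγ0, trKm_add, htr1,
      chi_add (isBit_trKm (by rw [mul_pow, hγ, mem_Km.1 hz])) (Or.inr rfl)]
    simp
  · simpa using And.intro (inv_ne_zero hγ0) hz₀0
  · rw [mem_Km] at hz ⊢
    rw [frob_add, hz, hshift]

theorem card_filter_norm_eq (hm : m ≠ 0) {z : GF (2 * m)} (hz : z ∈ (Km m).erase 0) :
    #{x ∈ univ.erase 0 | x ^ (2 ^ m + 1) = z} = 2 ^ m + 1 := by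
  refine card_fiber_eq_of_card_mul_le (fun x hx => norm_mem_Km_erase hm (ne_of_mem_erase hx))
    (fun b _ => ?_) ?_ hz
  · have hp : (X ^ (2 ^ m + 1) - C b : (GF (2 * m))[X]) ≠ 0 := fun h => by
      simpa [h] using (natDegree_X_pow_sub_C (n := 2 ^ m + 1) (r := b)).symm
    refine (card_le_natDegree_of_eval_eq_zero hp fun x hx => ?_).trans natDegree_X_pow_sub_C.le
    simp [(mem_filter.1 hx).2]
  · have h1 : 1 ≤ 2 ^ m := Nat.one_le_two_pow
    rw [card_erase_of_mem (mem_Km.2 (zero_pow (by positivity))), card_Km hm,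
      card_erase_of_mem (mem_univ _), card_univ, card_GF (by omega), pow_mul', sq]
    zify [h1, Nat.one_le_two_pow.trans (Nat.le_mul_self (2 ^ m))]
    exact le_of_eq (by ring)

theorem sum_chi_atr_mul_norm {β : GF (2 * m)} (hβ : β ^ 2 ^ m ≠ β) :
    ∑ x, chi (2 * m) (atr (2 * m) (β * x ^ (2 ^ m + 1))) = -2 ^ m := by
  have hm := ne_zero_of_frob_ne hβ
  set f : GF (2 * m) → ℤ := fun z => chi (2 * m) (trKm m ((β + β ^ 2 ^ m) * z))
  have hf0 : f 0 = 1 := by simp [f, trKm_eq_frobTrace]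
  have hKm : f 0 + ∑ z ∈ (Km m).erase 0, f z = 0 := by
    rw [add_sum_erase _ _ (mem_Km.2 (zero_pow (by positivity)))]
    exact sum_Km_chi_trKm_mul hm (gamma_ne_zero hβ) (frob_gamma hm β)
  calc ∑ x, chi (2 * m) (atr (2 * m) (β * x ^ (2 ^ m + 1)))
      = ∑ x, f (x ^ (2 ^ m + 1)) :=
        sum_congr rfl fun x _ => by rw [atr_mul_of_frob_eq β (frob_norm hm x)]
    _ = f 0 + ∑ x ∈ univ.erase 0, f (x ^ (2 ^ m + 1)) := by
        rw [← add_sum_erase _ _ (mem_univ 0), zero_pow (by positivity)]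
    _ = f 0 + ∑ z ∈ (Km m).erase 0, (2 ^ m + 1 : ℕ) • f z := by
        rw [← sum_fiberwise_of_maps_to' fun x hx => norm_mem_Km_erase hm (ne_of_mem_erase hx)]
        congr 1
        refine sum_congr rfl fun z hz => ?_
        rw [sum_const, card_filter_norm_eq hm hz]
    _ = -2 ^ m := by
        rw [← smul_sum, eq_neg_of_add_eq_zero_right hKm, hf0]
        ring

theorem atr_niho_add_shift (hm : m ≠ 0) (β v y : GF (2 * m)) (hγ : β + β ^ 2 ^ m ≠ 0) :
    atr (2 * m) (β * (y + v ^ 2 ^ m * (β + β ^ 2 ^ m)⁻¹) ^ (2 ^ m + 1))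
      + atr (2 * m) (v * (y + v ^ 2 ^ m * (β + β ^ 2 ^ m)⁻¹))
      = atr (2 * m) (β * y ^ (2 ^ m + 1)) + trKm m ((β + β ^ 2 ^ m)⁻¹ * v ^ (2 ^ m + 1)) := by
  set γ := β + β ^ 2 ^ m
  -- `c` is chosen so that the cross terms of `β (y + c)^(2^m+1)` have trace `Tr(v y)`.
  set c := v ^ 2 ^ m * γ⁻¹
  have hcq : c ^ 2 ^ m = v * γ⁻¹ := by
    simp only [c, mul_pow, frob_frob hm, inv_pow, γ, frob_gamma hm]
  have hγc : γ * c ^ 2 ^ m = v := by rw [hcq, mul_comm v, mul_inv_cancel_left₀ hγ]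
  have hvc : v * c = γ * (c ^ 2 ^ m * c) := by conv_lhs => rw [← hγc, mul_assoc]
  have hvcK : (v * c) ^ 2 ^ m = v * c := by
    rw [mul_pow, hcq]; simp only [c]; ring
  have hcross : atr (2 * m) (β * y ^ 2 ^ m * c) + atr (2 * m) (β * c ^ 2 ^ m * y)
      = atr (2 * m) (v * y) := by
    rw [← atr_frob hm (β * y ^ 2 ^ m * c), ← atr_add, ← hγc]
    congr 1
    rw [mul_pow, mul_pow, frob_frob hm]
    ring
  have hconst : atr (2 * m) (β * (c ^ 2 ^ m * c)) = trKm m (γ⁻¹ * v ^ (2 ^ m + 1)) := by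
    rw [atr_mul_of_frob_eq β (by rwa [hvc, mul_pow, frob_gamma hm, mul_right_inj' hγ] at hvcK),
      ← hvc]
    congr 1
    ring
  have hexp : β * (y + c) ^ (2 ^ m + 1) = β * y ^ (2 ^ m + 1) + β * y ^ 2 ^ m * c
      + β * c ^ 2 ^ m * y + β * (c ^ 2 ^ m * c) := by
    rw [pow_succ, frob_add]; ring
  simp only [hexp, mul_add v, atr_add, hconst, atr_of_frob_eq hvcK]
  linear_combination hcross + atr (2 * m) (v * y) * (CharTwo.two_eq_zero : (2 : GF (2 * m)) = 0)

theorem sum_chi_atr_niho_add {β : GF (2 * m)} (hβ : β ^ 2 ^ m ≠ β) (v : GF (2 * m)) :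
    ∑ x, chi (2 * m) (atr (2 * m) (β * x ^ (2 ^ m + 1)) + atr (2 * m) (v * x))
      = 2 ^ m * chi (2 * m) (nihoDual m (β + β ^ 2 ^ m) v) := by
  have hm := ne_zero_of_frob_ne hβ
  have ht : IsBit (trKm m ((β + β ^ 2 ^ m)⁻¹ * v ^ (2 ^ m + 1))) :=
    isBit_trKm (by rw [mul_pow, inv_pow, frob_gamma hm, frob_norm hm])
  rw [← Equiv.sum_comp (Equiv.addRight (v ^ 2 ^ m * (β + β ^ 2 ^ m)⁻¹))]
  simp only [Equiv.coe_addRight, atr_niho_add_shift hm β v _ (gamma_ne_zero hβ),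
    chi_add (isBit_atr (by omega) _) ht, ← sum_mul, sum_chi_atr_mul_norm hβ, nihoDual,
    chi_add ht (Or.inr rfl), chi_one]
  ring

end Subfield

def dirDeriv {α β : Type*} [Add α] [Add β] (g : α → β) (v x : α) : β := g (x + v) + g x

section NihoDual

variable {m : ℕ}

theorem isBit_nihoDual (hm : m ≠ 0) {γ : GF (2 * m)} (hγ : γ ^ 2 ^ m = γ) (x : GF (2 * m)) :
    IsBit (nihoDual m γ x) :=
  (isBit_trKm (by rw [mul_pow, inv_pow, hγ, frob_norm hm])).add (Or.inr rfl)

theorem isBit_dirDeriv_nihoDual (hm : m ≠ 0) {γ : GF (2 * m)} (hγ : γ ^ 2 ^ m = γ)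
    (b a : GF (2 * m)) : IsBit (dirDeriv (nihoDual m γ) b a) :=
  (isBit_nihoDual hm hγ _).add (isBit_nihoDual hm hγ _)

theorem dirDeriv_nihoDual_of_frob_eq (γ a : GF (2 * m)) {b : GF (2 * m)} (hb : b ^ 2 ^ m = b) :
    dirDeriv (nihoDual m γ) b a = trKm m (γ⁻¹ * (b * (a ^ 2 ^ m + a + b))) := by
  have hexp : γ⁻¹ * (a + b) ^ (2 ^ m + 1)
      = γ⁻¹ * a ^ (2 ^ m + 1) + γ⁻¹ * (b * (a ^ 2 ^ m + a + b)) := by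
    rw [pow_succ, frob_add, hb]; ring
  rw [dirDeriv, nihoDual, nihoDual, hexp, trKm_add]
  linear_combination (trKm m (γ⁻¹ * a ^ (2 ^ m + 1)) + 1)
    * (CharTwo.two_eq_zero : (2 : GF (2 * m)) = 0)

theorem dirDeriv_nihoDual_sum (γ a : GF (2 * m)) {ι : Type*} (s : Finset ι) {w : ι → GF (2 * m)}
    (hw : ∀ i ∈ s, w i ^ 2 ^ m = w i) :
    dirDeriv (nihoDual m γ) (∑ i ∈ s, w i) a = ∑ i ∈ s, dirDeriv (nihoDual m γ) (w i) a := by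
  have hsum : (∑ i ∈ s, w i) ^ 2 ^ m = ∑ i ∈ s, w i := by
    rw [sum_pow_char_pow]; exact sum_congr rfl hw
  rw [dirDeriv_nihoDual_of_frob_eq γ a hsum,
    sum_congr rfl fun i hi => dirDeriv_nihoDual_of_frob_eq γ a (hw i hi)]
  simp only [trKm_eq_frobTrace, ← map_sum, ← mul_sum]
  congr 2
  rw [mul_add, ← sq, CharTwo.sum_sq, sum_mul, ← sum_add_distrib]
  simp only [sq, mul_add]

theorem nihoDual_add_sum (γ v : GF (2 * m)) {ι : Type*} (s : Finset ι) {w : ι → GF (2 * m)}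
    (hw : ∀ i ∈ s, w i ^ 2 ^ m = w i) :
    nihoDual m γ (v + ∑ i ∈ s, w i)
      = nihoDual m γ v + ∑ i ∈ s, dirDeriv (nihoDual m γ) (w i) v := by
  rw [← dirDeriv_nihoDual_sum γ v s hw, dirDeriv, add_comm (nihoDual m γ (v + _)),
    CharTwo.add_cancel_left]

theorem dirDeriv_nihoDual_add_mul {β : GF (2 * m)} (hγ : β + β ^ 2 ^ m ≠ 0)
    {u b : GF (2 * m)} (hu : u ^ 2 ^ m = u) (hb : b ^ 2 ^ m = b) (hub : trKm m (u * b) = 0)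
    (a : GF (2 * m)) :
    dirDeriv (nihoDual m (β + β ^ 2 ^ m)) b (a + β * u)
      = dirDeriv (nihoDual m (β + β ^ 2 ^ m)) b a := by
  rw [dirDeriv_nihoDual_of_frob_eq _ _ hb, dirDeriv_nihoDual_of_frob_eq _ _ hb]
  have h : (β + β ^ 2 ^ m)⁻¹ * (b * ((a + β * u) ^ 2 ^ m + (a + β * u) + b))
      = (β + β ^ 2 ^ m)⁻¹ * (b * (a ^ 2 ^ m + a + b)) + u * b := by
    rw [frob_add, mul_pow, hu]
    field_simp
    ring
  rw [h, trKm_add, hub, add_zero]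

end NihoDual

theorem chi_sum_atr_add_mul_chi {ι : Type*} {k : ℕ} (hk : k ≠ 0) {τ : ι → GF k} (hτ : ∀ i, IsBit (τ i))
    (S : Finset ι) (w : ι → GF k) (y v x : GF k) :
    chi k (∑ i ∈ S, (atr k (w i * x) + τ i)) * chi k (atr k y + atr k (v * x))
      = chi k (∑ i ∈ S, τ i) * chi k (atr k y + atr k ((v + ∑ i ∈ S, w i) * x)) := by
  have hbit := isBit_atr hk
  rw [sum_add_distrib, chi_add (isBit_sum fun i _ => hbit _) (isBit_sum fun i _ => hτ i),
    add_mul, atr_add, ← add_assoc, chi_add ((hbit _).add (hbit _)) (hbit _)]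
  simp only [atr_eq_frobTrace, sum_mul, map_sum]
  ring

section Walsh

variable {m : ℕ} {β : GF (2 * m)} {ι : Type*} [Fintype ι]

theorem sum_filter_atr_eq_chi_nihoDual (hβ : β ^ 2 ^ m ≠ β) {w : ι → GF (2 * m)}
    (hw : ∀ i, w i ^ 2 ^ m = w i) {τ : ι → GF (2 * m)} (hτ : ∀ i, IsBit (τ i)) (v : GF (2 * m)) :
    ∑ x with (fun i => atr (2 * m) (w i * x)) = τ,
        chi (2 * m) (atr (2 * m) (β * x ^ (2 ^ m + 1)) + atr (2 * m) (v * x))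
      = if τ = (fun i => dirDeriv (nihoDual m (β + β ^ 2 ^ m)) (w i) v)
        then 2 ^ m * chi (2 * m) (nihoDual m (β + β ^ 2 ^ m) v) else 0 := by
  have hm := ne_zero_of_frob_ne hβ
  set γ := β + β ^ 2 ^ m
  set d := fun i => dirDeriv (nihoDual m γ) (w i) v
  set g := fun x => chi (2 * m) (atr (2 * m) (β * x ^ (2 ^ m + 1)) + atr (2 * m) (v * x))
  have hd : ∀ i, IsBit (d i) := fun i => isBit_dirDeriv_nihoDual hm (frob_gamma hm β) _ _
  have hind : ∀ x, ∑ S ∈ univ.powerset, chi (2 * m) (∑ i ∈ S, (atr (2 * m) (w i * x) + τ i))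
      = if (fun i => atr (2 * m) (w i * x)) = τ then 2 ^ Fintype.card ι else 0 := fun x =>
    sum_powerset_chi_sum_add (fun i => isBit_atr (by omega) _) hτ
  have hfin : ∑ S ∈ univ.powerset, chi (2 * m) (∑ i ∈ S, (τ i + d i))
      = if τ = d then 2 ^ Fintype.card ι else 0 :=
    sum_powerset_chi_sum_add hτ hd
  refine mul_left_cancel₀ (pow_ne_zero (Fintype.card ι) (two_ne_zero : (2 : ℤ) ≠ 0)) ?_
  calc 2 ^ Fintype.card ι * ∑ x with (fun i => atr (2 * m) (w i * x)) = τ, g x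
      = ∑ x, ∑ S ∈ univ.powerset,
          chi (2 * m) (∑ i ∈ S, (atr (2 * m) (w i * x) + τ i)) * g x := by
        simp only [sum_filter, mul_sum, ← sum_mul, hind, ite_mul, zero_mul, mul_ite, mul_zero]
    _ = ∑ S ∈ univ.powerset, chi (2 * m) (∑ i ∈ S, τ i)
          * (2 ^ m * chi (2 * m) (nihoDual m γ v + ∑ i ∈ S, d i)) := by
        rw [sum_comm]
        refine sum_congr rfl fun S _ => ?_
        simp only [g, chi_sum_atr_add_mul_chi (by omega) hτ, ← mul_sum, sum_chi_atr_niho_add hβ,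
          nihoDual_add_sum _ _ S fun i _ => hw i]
        rfl
    _ = 2 ^ m * chi (2 * m) (nihoDual m γ v)
          * ∑ S ∈ univ.powerset, chi (2 * m) (∑ i ∈ S, (τ i + d i)) := by
        rw [mul_sum]
        refine sum_congr rfl fun S _ => ?_
        rw [chi_add (isBit_nihoDual hm (frob_gamma hm β) v) (isBit_sum fun i _ => hd i),
          sum_add_distrib, chi_add (isBit_sum fun i _ => hτ i) (isBit_sum fun i _ => hd i)]
        ring
    _ = _ := by rw [hfin]; split_ifs <;> ring

theorem walsh_atr_mul_niho_add_eq (hβ : β ^ 2 ^ m ≠ β) {u₁ : GF (2 * m)} (hu₁ : u₁ ^ 2 ^ m = u₁)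
    {w : ι → GF (2 * m)} (hw : ∀ i, w i ^ 2 ^ m = w i) (horth : ∀ i, trKm m (u₁ * w i) = 0)
    {R : (ι → GF (2 * m)) → GF (2 * m)} (hR : ∀ τ, IsBit (R τ)) (ω : GF (2 * m)) :
    walsh (2 * m)
        (fun x => atr (2 * m) (β * (x ^ (2 ^ m + 1) + u₁ * x * R fun i => atr (2 * m) (w i * x))))
        ω
      = 2 ^ m * chi (2 * m) (nihoDual m (β + β ^ 2 ^ m) ω
          + dirDeriv (nihoDual m (β + β ^ 2 ^ m)) (β * u₁) ω
            * R fun i => dirDeriv (nihoDual m (β + β ^ 2 ^ m)) (w i) ω) := by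
  set G := nihoDual m (β + β ^ 2 ^ m)
  set t := fun x => fun i => atr (2 * m) (w i * x)
  set bits : Finset (ι → GF (2 * m)) := {τ | ∀ i, IsBit (τ i)}
  have hm := ne_zero_of_frob_ne hβ
  have ht : ∀ x ∈ univ, t x ∈ bits :=
    fun x _ => mem_filter.2 ⟨mem_univ _, fun i => isBit_atr (by omega) _⟩
  have hd : (fun i => dirDeriv G (w i) ω) ∈ bits :=
    mem_filter.2 ⟨mem_univ _, fun i => isBit_dirDeriv_nihoDual hm (frob_gamma hm β) _ _⟩
  have hfiber : ∀ τ ∈ bits, ∑ x with t x = τ,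
      chi (2 * m) (atr (2 * m) (β * x ^ (2 ^ m + 1)) + atr (2 * m) ((ω + R τ * (β * u₁)) * x))
      = if τ = (fun i => dirDeriv G (w i) ω)
        then 2 ^ m * chi (2 * m) (G ω + dirDeriv G (β * u₁) ω * R τ) else 0 := fun τ hτ => by
    rw [sum_filter_atr_eq_chi_nihoDual hβ hw (mem_filter.1 hτ).2]
    rcases hR τ with h | h
    · simp [h, G]
    · have hD : (fun i => dirDeriv G (w i) (ω + β * u₁)) = fun i => dirDeriv G (w i) ω :=
        funext fun i => dirDeriv_nihoDual_add_mul (gamma_ne_zero hβ) hu₁ (hw i) (horth i) ω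
      rw [h, one_mul, mul_one, hD, dirDeriv, add_comm (G (ω + β * u₁)), CharTwo.add_cancel_left]
  calc _ = ∑ x, chi (2 * m) (atr (2 * m) (β * x ^ (2 ^ m + 1))
        + atr (2 * m) ((ω + R (t x) * (β * u₁)) * x)) := by
        refine sum_congr rfl fun x _ => congrArg _ ?_
        simp only [t, mul_add, add_mul, atr_add]
        ring_nf
    _ = ∑ τ ∈ bits, ∑ x with t x = τ, chi (2 * m) (atr (2 * m) (β * x ^ (2 ^ m + 1))
        + atr (2 * m) ((ω + R τ * (β * u₁)) * x)) := by
        rw [← sum_fiberwise_of_maps_to ht]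
        refine sum_congr rfl fun τ _ => sum_congr rfl fun x hx => ?_
        rw [(mem_filter.1 hx).2]
    _ = _ := by rw [sum_congr rfl hfiber, sum_ite_eq', if_pos hd, mul_comm (dirDeriv _ _ _)]

end Walsh

theorem stmt7 (m k : ℕ) (hk3 : 3 ≤ k)
    (u : ℕ → GF (2*m))
    (huK : ∀ i, 1 ≤ i → i ≤ k → (u i) ^ 2 ^ m = u i)
    (hortho : ∀ j, 2 ≤ j → j ≤ k → trKm m (u 1 * u j) = 0)
    (R : (Fin (k-1) → GF (2*m)) → GF (2*m)) (hR : ∀ v, R v = 0 ∨ R v = 1)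
    (F : GF (2*m) → GF (2*m))
    (hF : ∀ x, F x = x ^ (2 ^ m + 1)
        + u 1 * x * R (fun j => atr (2*m) (u (j.1 + 2) * x)))
    (β : GF (2*m)) (hβ : β ^ 2 ^ m ≠ β) :
    (∀ ω, (walsh (2*m) (fun x => atr (2*m) (β * F x)) ω) ^ 2 = 2 ^ (2*m)) ∧
    (∀ ω, walsh (2*m) (fun x => atr (2*m) (β * F x)) ω
      = 2 ^ m * chi (2*m)
          (nihoDual m (β + β ^ 2 ^ m) ω
            + (nihoDual m (β + β ^ 2 ^ m) (ω + β * u 1) + nihoDual m (β + β ^ 2 ^ m) ω)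
              * R (fun j =>
                  nihoDual m (β + β ^ 2 ^ m) (ω + u (j.1 + 2))
                    + nihoDual m (β + β ^ 2 ^ m) ω))) := by
  have hW := walsh_atr_mul_niho_add_eq hβ (huK 1 le_rfl (by omega))
    (fun j => huK (j.1 + 2) (by omega) (by have := j.2; omega))
    (fun j => hortho (j.1 + 2) (by omega) (by have := j.2; omega)) hR
  simp only [← hF] at hW
  refine ⟨fun ω => ?_, hW⟩
  rw [hW, mul_pow, chi_sq, mul_one, ← pow_mul, mul_comm]
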